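/- arXiv:2202.07262 — 4 statements merged into one kernel-verified Lean document; each statement's English description precedes it below -/
import Mathlib

section
/- Let F : ℝᵈ → ℝᵈ be μ-quasi-strongly monotone with respect to a solution x* (⟨F(x) - F(x*), x - x*⟩ ≥ μ‖x - x*‖² for all x) with F(x*) = 0 and μ > 0, and suppose the stochastic estimator g of F(x) satisfies E[g] = F(x) and E[‖g‖²] ≤ 2A·⟨F(x), x - x*⟩ + D for constants A > 0, D ≥ 0. Then for the update x⁺ = x - γ·g with 0 < γ ≤ 1/(2A), E[‖x⁺ - x*‖²] ≤ (1 - γμ)·‖x - x*‖² + γ²·D. -/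
/-!
Expanding the square, `‖x - γ g - x*‖² = ‖x - x*‖² - 2γ⟪x - x*, g⟫ + γ²‖g‖²`, and taking
expectations turns the cross term into `-2γ⟪F x, x - x*⟫` by unbiasedness. The second-moment bound
and `γ A ≤ 1/2` absorb half of that term, and quasi-strong monotonicity (with `F x* = 0`) turns the
remaining `-γ⟪F x, x - x*⟫` into the contraction `-γμ‖x - x*‖²`.
-/

open MeasureTheory RealInnerProductSpace

section InnerProductSpace

variable {E : Type*} [NormedAddCommGroup E] [InnerProductSpace ℝ E]

theorem norm_sub_smul_sub_sq (x y v : E) (γ : ℝ) :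
    ‖(x - γ • v) - y‖ ^ 2 = ‖x - y‖ ^ 2 - 2 * γ * ⟪x - y, v⟫ + γ ^ 2 * ‖v‖ ^ 2 := by
  rw [sub_right_comm, norm_sub_sq_real, inner_smul_right, norm_smul, mul_pow,
    Real.norm_eq_abs, sq_abs]
  ring

theorem integral_norm_sub_smul_sub_sq [CompleteSpace E] {Ω : Type*} [MeasurableSpace Ω]
    (μ : Measure Ω) [IsProbabilityMeasure μ] {g : Ω → E} (hg : MemLp g 2 μ) (x y : E) (γ : ℝ) :
    ∫ ω, ‖(x - γ • g ω) - y‖ ^ 2 ∂μ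
      = ‖x - y‖ ^ 2 - 2 * γ * ⟪x - y, ∫ ω, g ω ∂μ⟫ + γ ^ 2 * ∫ ω, ‖g ω‖ ^ 2 ∂μ := by
  have hg_int : Integrable g μ := hg.integrable one_le_two
  have h_inner : Integrable (fun ω ↦ ⟪x - y, g ω⟫) μ := hg_int.const_inner _
  have h_affine : Integrable (fun ω ↦ ‖x - y‖ ^ 2 - 2 * γ * ⟪x - y, g ω⟫) μ :=
    (integrable_const _).sub (h_inner.const_mul _)
  simp_rw [norm_sub_smul_sub_sq]
  rw [integral_add h_affine (hg.norm.integrable_sq.const_mul _),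
    integral_sub (integrable_const _) (h_inner.const_mul _), integral_const, integral_const_mul,
    integral_const_mul, integral_inner hg_int]
  simp

end InnerProductSpace

theorem stmt_6_general {Ω : Type*} [MeasurableSpace Ω] (μ : Measure Ω) [IsProbabilityMeasure μ]
    {d : ℕ} (F : EuclideanSpace ℝ (Fin d) → EuclideanSpace ℝ (Fin d))
    (x xs : EuclideanSpace ℝ (Fin d)) (μc A D γ : ℝ)
    (hμc : 0 < μc) (hA : 0 < A)
    (hqsm : ∀ y, ⟪F y - F xs, y - xs⟫ ≥ μc * ‖y - xs‖ ^ 2)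
    (hFxs : F xs = 0)
    (g : Ω → EuclideanSpace ℝ (Fin d)) (hg : MemLp g 2 μ)
    (hunbiased : ∫ ω, g ω ∂μ = F x)
    (hsecond : ∫ ω, ‖g ω‖ ^ 2 ∂μ ≤ 2 * A * ⟪F x, x - xs⟫ + D)
    (hγ0 : 0 < γ) (hγ : γ ≤ 1 / (2 * A)) :
    ∫ ω, ‖(x - γ • g ω) - xs‖ ^ 2 ∂μ ≤ (1 - γ * μc) * ‖x - xs‖ ^ 2 + γ ^ 2 * D := by
  have h_monotone : μc * ‖x - xs‖ ^ 2 ≤ ⟪F x, x - xs⟫ := by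
    simpa [hFxs] using hqsm x
  have h_inner_nonneg : 0 ≤ ⟪F x, x - xs⟫ := le_trans (by positivity) h_monotone
  have h_step : 2 * γ * A ≤ 1 := by
    rw [le_div_iff₀ (by positivity)] at hγ
    linarith
  calc ∫ ω, ‖(x - γ • g ω) - xs‖ ^ 2 ∂μ
      = ‖x - xs‖ ^ 2 - 2 * γ * ⟪F x, x - xs⟫ + γ ^ 2 * ∫ ω, ‖g ω‖ ^ 2 ∂μ := by
        rw [integral_norm_sub_smul_sub_sq μ hg, hunbiased, real_inner_comm]
    _ ≤ ‖x - xs‖ ^ 2 - 2 * γ * ⟪F x, x - xs⟫ + γ ^ 2 * (2 * A * ⟪F x, x - xs⟫ + D) := by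
        gcongr
    _ = ‖x - xs‖ ^ 2 - γ * ⟪F x, x - xs⟫ - γ * (1 - 2 * γ * A) * ⟪F x, x - xs⟫ + γ ^ 2 * D := by
        ring
    _ ≤ ‖x - xs‖ ^ 2 - γ * (μc * ‖x - xs‖ ^ 2) - 0 + γ ^ 2 * D := by
        gcongr
        exact mul_nonneg (mul_nonneg hγ0.le (by linarith)) h_inner_nonneg
    _ = (1 - γ * μc) * ‖x - xs‖ ^ 2 + γ ^ 2 * D := by
        ring

theorem stmt_6 {Ω : Type*} [MeasurableSpace Ω] (μ : Measure Ω) [IsProbabilityMeasure μ]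
    {d : ℕ} (F : EuclideanSpace ℝ (Fin d) → EuclideanSpace ℝ (Fin d))
    (x xs : EuclideanSpace ℝ (Fin d)) (μc A D γ : ℝ)
    (hμc : 0 < μc) (hA : 0 < A) (hD : 0 ≤ D)
    (hqsm : ∀ y, ⟪F y - F xs, y - xs⟫ ≥ μc * ‖y - xs‖ ^ 2)
    (hFxs : F xs = 0)
    (g : Ω → EuclideanSpace ℝ (Fin d)) (hg : MemLp g 2 μ)
    (hunbiased : ∫ ω, g ω ∂μ = F x)
    (hsecond : ∫ ω, ‖g ω‖ ^ 2 ∂μ ≤ 2 * A * ⟪F x, x - xs⟫ + D)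
    (hγ0 : 0 < γ) (hγ : γ ≤ 1 / (2 * A)) :
    ∫ ω, ‖(x - γ • g ω) - xs‖ ^ 2 ∂μ ≤ (1 - γ * μc) * ‖x - xs‖ ^ 2 + γ ^ 2 * D :=
  stmt_6_general μ F x xs μc A D γ hμc hA hqsm hFxs g hg hunbiased hsecond hγ0 hγ
end

section
/- Let A, B, C ≥ 0, ρ ∈ (0,1], μ > 0, and M = 2B/ρ. If 0 < γ ≤ min{1/μ, 1/(2(A + CM))}, and nonnegative sequences {a_k}, {s_k} satisfy the coupled recursion a_{k+1} + Mγ²·s_{k+1} ≤ a_k + Mγ²(1 - ρ + B/M)·s_k - 2γ(1 - γ(A + CM))·t_k + γ²(D₁ + M·D₂) with t_k ≥ μ·a_k and t_k ≥ 0, then the Lyapunov quantity V_k = a_k + Mγ²·s_k satisfies V_{k+1} ≤ (1 - min{γμ, ρ/2})·V_k + γ²(D₁ + M·D₂). -/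
/-! With `M = 2B/ρ` the `s`-coefficient `1 - ρ + B/M` is exactly `1 - ρ/2`, so that part of the
Lyapunov function contracts by `ρ/2`. For the `a`-part, the step-size bound `γ(A + CM) ≤ 1/2`
leaves at least `γ t_k ≥ γμ a_k` of descent, i.e. a contraction by `γμ`. -/

lemma mul_le_one_half_of_le_one_div_two_mul {γ x : ℝ} (hγ : 0 ≤ γ) (h : γ ≤ 1 / (2 * x)) :
    γ * x ≤ 1 / 2 := by
  rcases le_or_gt x 0 with hx | hx
  · nlinarith
  · rw [le_div_iff₀ (by positivity)] at h
    linarith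

lemma mul_one_sub_add_div_eq_of_eq_two_mul_div {B M ρ : ℝ} (hρ : ρ ≠ 0) (hM : M = 2 * B / ρ) :
    M * (1 - ρ + B / M) = M * (1 - ρ / 2) := by
  rcases eq_or_ne M 0 with h0 | h0
  · simp [h0]
  · have hB : B = M * ρ / 2 := by rw [hM]; field_simp
    rw [hB]
    field_simp
    ring

lemma mul_le_two_mul_mul_one_sub_mul {γ κ μ a t c : ℝ} (hγ : 0 ≤ γ) (hκ : γ * κ ≤ 1 / 2)
    (ha : 0 ≤ a) (ht0 : 0 ≤ t) (ht : μ * a ≤ t) (hc : c ≤ γ * μ) :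
    c * a ≤ 2 * γ * (1 - γ * κ) * t :=
  calc c * a ≤ γ * μ * a := mul_le_mul_of_nonneg_right hc ha
    _ = γ * (μ * a) := by ring
    _ ≤ γ * t := mul_le_mul_of_nonneg_left ht hγ
    _ ≤ 2 * γ * (1 - γ * κ) * t := by nlinarith [mul_nonneg hγ ht0]

theorem stmt_8_general (A B C ρ μ γ D₁ D₂ : ℝ) (M : ℝ)
    (hB : 0 ≤ B) (hρ0 : 0 < ρ)
    (hM : M = 2 * B / ρ)
    (hγ0 : 0 < γ) (hγ : γ ≤ min (1 / μ) (1 / (2 * (A + C * M))))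
    (a s t : ℕ → ℝ) (ha : ∀ k, 0 ≤ a k) (hs : ∀ k, 0 ≤ s k)
    (ht0 : ∀ k, 0 ≤ t k) (ht : ∀ k, μ * a k ≤ t k)
    (hrec : ∀ k, a (k + 1) + M * γ ^ 2 * s (k + 1) ≤
      a k + M * γ ^ 2 * (1 - ρ + B / M) * s k
        - 2 * γ * (1 - γ * (A + C * M)) * t k + γ ^ 2 * (D₁ + M * D₂)) :
    ∀ k, a (k + 1) + M * γ ^ 2 * s (k + 1) ≤
      (1 - min (γ * μ) (ρ / 2)) * (a k + M * γ ^ 2 * s k) + γ ^ 2 * (D₁ + M * D₂) := by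
  intro k
  set c := min (γ * μ) (ρ / 2)
  have hstep : γ * (A + C * M) ≤ 1 / 2 :=
    mul_le_one_half_of_le_one_div_two_mul hγ0.le (hγ.trans (min_le_right _ _))
  have hdescent : c * a k ≤ 2 * γ * (1 - γ * (A + C * M)) * t k :=
    mul_le_two_mul_mul_one_sub_mul hγ0.le hstep (ha k) (ht0 k) (ht k) (min_le_left _ _)
  have hcoeff : M * γ ^ 2 * (1 - ρ + B / M) * s k = (1 - ρ / 2) * (M * γ ^ 2 * s k) := by
    linear_combination γ ^ 2 * s k * mul_one_sub_add_div_eq_of_eq_two_mul_div hρ0.ne' hM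
  have hS : 0 ≤ M * γ ^ 2 * s k := by rw [hM]; have := hs k; positivity
  have hcontract : (1 - ρ / 2) * (M * γ ^ 2 * s k) ≤ (1 - c) * (M * γ ^ 2 * s k) :=
    mul_le_mul_of_nonneg_right (by linarith [min_le_right (γ * μ) (ρ / 2)]) hS
  linarith [hrec k]

theorem stmt_8 (A B C ρ μ γ D₁ D₂ : ℝ) (M : ℝ)
    (hA : 0 ≤ A) (hB : 0 ≤ B) (hC : 0 ≤ C) (hρ0 : 0 < ρ) (hρ1 : ρ ≤ 1)
    (hμ : 0 < μ) (hM : M = 2 * B / ρ)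
    (hD₁ : 0 ≤ D₁) (hD₂ : 0 ≤ D₂)
    (hγ0 : 0 < γ) (hγ : γ ≤ min (1 / μ) (1 / (2 * (A + C * M))))
    (a s t : ℕ → ℝ) (ha : ∀ k, 0 ≤ a k) (hs : ∀ k, 0 ≤ s k)
    (ht0 : ∀ k, 0 ≤ t k) (ht : ∀ k, μ * a k ≤ t k)
    (hrec : ∀ k, a (k + 1) + M * γ ^ 2 * s (k + 1) ≤
      a k + M * γ ^ 2 * (1 - ρ + B / M) * s k
        - 2 * γ * (1 - γ * (A + C * M)) * t k + γ ^ 2 * (D₁ + M * D₂)) :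
    ∀ k, a (k + 1) + M * γ ^ 2 * s (k + 1) ≤
      (1 - min (γ * μ) (ρ / 2)) * (a k + M * γ ^ 2 * s k) + γ ^ 2 * (D₁ + M * D₂) :=
  stmt_8_general A B C ρ μ γ D₁ D₂ M hB hρ0 hM hγ0 hγ a s t ha hs ht0 ht hrec
end

section
/- Consider vectors h_i, g_i, y_i ∈ ℝᵈ for i ∈ [n] and let an ω-unbiased compressor Q act independently on each Δ_i = g_i - h_i. Define h_i⁺ = h_i + α·Q(Δ_i) with 0 < α ≤ 1/(1+ω). If additionally E[g_i] = v_i (with g_i independent of Q), then E[‖h_i⁺ - y_i‖²] ≤ (1 - α)·‖h_i - y_i‖² + α·E[‖g_i - y_i‖²]. -/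
/-!
Conditionally on `g`, the update `h⁺ - y = (h - y) + α Q(g - h)` has mean `(h - y) + α (g - h)` by
unbiasedness of `Q`, so its second moment is at most
`‖h - y‖² + 2α⟪h - y, g - h⟫ + α²(1 + ω)‖g - h‖² ≤ ‖h - y‖² + 2α⟪h - y, g - h⟫ + α‖g - h‖²`,
using `α(1 + ω) ≤ 1`. The right-hand side is exactly `(1 - α)‖h - y‖² + α‖g - y‖²`;
integrating over `g` finishes the proof.
-/

open MeasureTheory

section

variable {Ω E : Type*} [MeasurableSpace Ω] {μ : Measure Ω} [IsProbabilityMeasure μ]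
  [NormedAddCommGroup E] [InnerProductSpace ℝ E] [CompleteSpace E]

lemma integral_norm_add_smul_sq {X : Ω → E} (hX : MemLp X 2 μ) (a : E) (c : ℝ) :
    ∫ ω, ‖a + c • X ω‖ ^ 2 ∂μ =
      ‖a‖ ^ 2 + 2 * c * inner ℝ a (∫ ω, X ω ∂μ) + c ^ 2 * ∫ ω, ‖X ω‖ ^ 2 ∂μ := by
  have hX_int : Integrable X μ := hX.integrable one_le_two
  have hX_sq : Integrable (fun ω => ‖X ω‖ ^ 2) μ := hX.integrable_norm_pow' (p := 2)
  have hinner : Integrable (fun ω => inner ℝ a (X ω)) μ := hX_int.const_inner a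
  have expand : ∀ ω, ‖a + c • X ω‖ ^ 2 =
      ‖a‖ ^ 2 + 2 * c * inner ℝ a (X ω) + c ^ 2 * ‖X ω‖ ^ 2 := fun ω => by
    rw [norm_add_sq_real, inner_smul_right, norm_smul, mul_pow, Real.norm_eq_abs, sq_abs]
    ring
  simp_rw [expand]
  rw [integral_add (by exact (integrable_const _).add (hinner.const_mul _)) (hX_sq.const_mul _),
    integral_add (integrable_const _) (hinner.const_mul _), integral_const,
    integral_const_mul, integral_const_mul, integral_inner hX_int]
  simp

lemma integral_norm_add_smul_sub_sq_le {X : Ω → E} (hX : MemLp X 2 μ) {g h y : E} {w α : ℝ}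
    (hα : 0 ≤ α) (hαw : α * (1 + w) ≤ 1) (hmean : ∫ ω, X ω ∂μ = g - h)
    (hsecond : ∫ ω, ‖X ω‖ ^ 2 ∂μ ≤ (1 + w) * ‖g - h‖ ^ 2) :
    ∫ ω, ‖h + α • X ω - y‖ ^ 2 ∂μ ≤ (1 - α) * ‖h - y‖ ^ 2 + α * ‖g - y‖ ^ 2 := by
  have hshift : ∀ ω, h + α • X ω - y = (h - y) + α • X ω := fun ω => by abel
  simp_rw [hshift]
  rw [integral_norm_add_smul_sq hX, hmean]
  have hvariance : α ^ 2 * ∫ ω, ‖X ω‖ ^ 2 ∂μ ≤ α * ‖g - h‖ ^ 2 :=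
    calc α ^ 2 * ∫ ω, ‖X ω‖ ^ 2 ∂μ ≤ α ^ 2 * ((1 + w) * ‖g - h‖ ^ 2) := by gcongr
      _ = α * (α * (1 + w)) * ‖g - h‖ ^ 2 := by ring
      _ ≤ α * 1 * ‖g - h‖ ^ 2 := by gcongr
      _ = α * ‖g - h‖ ^ 2 := by ring
  have hsplit : ‖g - y‖ ^ 2 = ‖h - y‖ ^ 2 + 2 * inner ℝ (h - y) (g - h) + ‖g - h‖ ^ 2 := by
    rw [← norm_add_sq_real, sub_add_sub_cancel']
  rw [hsplit]
  linarith

end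

theorem stmt_15_general {Ω₁ Ω₂ : Type*} [MeasurableSpace Ω₁] [MeasurableSpace Ω₂]
    (μ₁ : Measure Ω₁) (μ₂ : Measure Ω₂)
    [IsProbabilityMeasure μ₁] [IsProbabilityMeasure μ₂]
    {d : ℕ} (Q : Ω₁ → EuclideanSpace ℝ (Fin d) → EuclideanSpace ℝ (Fin d))
    (w α : ℝ) (hα0 : 0 < α) (hα : α ≤ 1 / (1 + w))
    (hQL2 : ∀ x, MemLp (fun ω₁ => Q ω₁ x) 2 μ₁)
    (hQunbiased : ∀ x, ∫ ω₁, Q ω₁ x ∂μ₁ = x)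
    (hQsecond : ∀ x, ∫ ω₁, ‖Q ω₁ x‖ ^ 2 ∂μ₁ ≤ (1 + w) * ‖x‖ ^ 2)
    (h y : EuclideanSpace ℝ (Fin d))
    (g : Ω₂ → EuclideanSpace ℝ (Fin d)) (hgL2 : MemLp g 2 μ₂) :
    ∫ ω₂, ∫ ω₁, ‖(h + α • Q ω₁ (g ω₂ - h)) - y‖ ^ 2 ∂μ₁ ∂μ₂ ≤
      (1 - α) * ‖h - y‖ ^ 2 + α * ∫ ω₂, ‖g ω₂ - y‖ ^ 2 ∂μ₂ := by
  have hw_pos : 0 < 1 + w := one_div_pos.mp (hα0.trans_le hα)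
  have hαw : α * (1 + w) ≤ 1 := by rwa [← le_div_iff₀ hw_pos]
  have hstep : ∀ ω₂, ∫ ω₁, ‖(h + α • Q ω₁ (g ω₂ - h)) - y‖ ^ 2 ∂μ₁ ≤
      (1 - α) * ‖h - y‖ ^ 2 + α * ‖g ω₂ - y‖ ^ 2 := fun ω₂ =>
    integral_norm_add_smul_sub_sq_le (hQL2 _) hα0.le hαw (hQunbiased _) (hQsecond _)
  have hgy_sq : Integrable (fun ω₂ => ‖g ω₂ - y‖ ^ 2) μ₂ :=
    (hgL2.sub (memLp_const y)).integrable_norm_pow' (p := 2)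
  calc ∫ ω₂, ∫ ω₁, ‖(h + α • Q ω₁ (g ω₂ - h)) - y‖ ^ 2 ∂μ₁ ∂μ₂
      ≤ ∫ ω₂, ((1 - α) * ‖h - y‖ ^ 2 + α * ‖g ω₂ - y‖ ^ 2) ∂μ₂ :=
        integral_mono_of_nonneg (.of_forall fun _ => integral_nonneg fun _ => by positivity)
          ((integrable_const _).add (hgy_sq.const_mul _)) (.of_forall hstep)
    _ = (1 - α) * ‖h - y‖ ^ 2 + α * ∫ ω₂, ‖g ω₂ - y‖ ^ 2 ∂μ₂ := by
        rw [integral_add (integrable_const _) (hgy_sq.const_mul _), integral_const,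
          integral_const_mul]
        simp

theorem stmt_15 {Ω₁ Ω₂ : Type*} [MeasurableSpace Ω₁] [MeasurableSpace Ω₂]
    (μ₁ : Measure Ω₁) (μ₂ : Measure Ω₂)
    [IsProbabilityMeasure μ₁] [IsProbabilityMeasure μ₂]
    {d : ℕ} (Q : Ω₁ → EuclideanSpace ℝ (Fin d) → EuclideanSpace ℝ (Fin d))
    (w α : ℝ) (hw : 0 ≤ w) (hα0 : 0 < α) (hα : α ≤ 1 / (1 + w))
    (hQL2 : ∀ x, MemLp (fun ω₁ => Q ω₁ x) 2 μ₁)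
    (hQunbiased : ∀ x, ∫ ω₁, Q ω₁ x ∂μ₁ = x)
    (hQsecond : ∀ x, ∫ ω₁, ‖Q ω₁ x‖ ^ 2 ∂μ₁ ≤ (1 + w) * ‖x‖ ^ 2)
    (h y v : EuclideanSpace ℝ (Fin d))
    (g : Ω₂ → EuclideanSpace ℝ (Fin d)) (hgL2 : MemLp g 2 μ₂)
    (hgunbiased : ∫ ω₂, g ω₂ ∂μ₂ = v) :
    ∫ ω₂, ∫ ω₁, ‖(h + α • Q ω₁ (g ω₂ - h)) - y‖ ^ 2 ∂μ₁ ∂μ₂ ≤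
      (1 - α) * ‖h - y‖ ^ 2 + α * ∫ ω₂, ‖g ω₂ - y‖ ^ 2 ∂μ₂ :=
  stmt_15_general μ₁ μ₂ Q w α hα0 hα hQL2 hQunbiased hQsecond h y g hgL2
end

section
/- Let V^k = ∑_{i=1}^n ∑_{j=1}^m ‖F_{ij}(w_i^k) - F_{ij}(x*)‖², where each w_i^{k+1} equals x^k with probability p and w_i^k with probability 1 - p, independently across i. Suppose (1/(nm))·∑_{i,j} ‖F_{ij}(x^k) - F_{ij}(x*)‖² ≤ ℓ̃·⟨F(x^k) - F(x*), x^k - x*⟩. Then E_k[V^{k+1}] ≤ (1-p)·V^k + n·m·p·ℓ̃·⟨F(x^k) - F(x*), x^k - x*⟩. -/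
/-!
Each summand `i` of `V^{k+1}` equals the `x^k`-term with probability `p` and the `w_i^k`-term
otherwise, so by linearity of expectation `E_k[V^{k+1}] = p · ∑ᵢⱼ ‖F_{ij}(x^k) - F_{ij}(x*)‖² + (1 - p) · V^k`,
and the cocoercivity-type hypothesis bounds the first sum by `n m ℓ̃ ⟪F(x^k) - F(x*), x^k - x*⟫`.
-/

open MeasureTheory RealInnerProductSpace

section Bernoulli

variable {Ω E : Type*} [MeasurableSpace Ω] {μ : Measure Ω} [IsProbabilityMeasure μ]
  [NormedAddCommGroup E] [NormedSpace ℝ E] [CompleteSpace E] {p : ℝ}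

theorem integral_ite_of_measure_eq_ofReal {b : Ω → Bool} (hb : Measurable b)
    (hbp : μ {ω | b ω = true} = ENNReal.ofReal p) (hp : 0 ≤ p) (a c : E) :
    ∫ ω, (if b ω then a else c) ∂μ = p • a + (1 - p) • c := by
  have hs : MeasurableSet {ω | b ω = true} := hb (measurableSet_singleton true)
  have hμs : μ.real {ω | b ω = true} = p := by rw [measureReal_def, hbp, ENNReal.toReal_ofReal hp]
  calc ∫ ω, (if b ω then a else c) ∂μ
      = ∫ ω, Set.piecewise {ω | b ω = true} (fun _ => a) (fun _ => c) ω ∂μ := rfl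
    _ = ∫ _ in {ω | b ω = true}, a ∂μ + ∫ _ in {ω | b ω = true}ᶜ, c ∂μ :=
      integral_piecewise hs integrableOn_const integrableOn_const
    _ = p • a + (1 - p) • c := by
      rw [setIntegral_const, setIntegral_const, measureReal_compl hs, hμs, probReal_univ]

theorem integral_sum_ite_of_measure_eq_ofReal {ι : Type*} [Fintype ι] {b : ι → Ω → Bool}
    (hb : ∀ i, Measurable (b i)) (hbp : ∀ i, μ {ω | b i ω = true} = ENNReal.ofReal p)
    (hp : 0 ≤ p) (a c : ι → E) :
    ∫ ω, ∑ i, (if b i ω then a i else c i) ∂μ = p • ∑ i, a i + (1 - p) • ∑ i, c i := by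
  have hint : ∀ i, Integrable (fun ω => if b i ω then a i else c i) μ := fun i =>
    Integrable.piecewise (s := {ω | b i ω = true}) (hb i (measurableSet_singleton true)) integrableOn_const integrableOn_const
  rw [integral_finsetSum _ fun i _ => hint i, Finset.smul_sum, Finset.smul_sum,
    ← Finset.sum_add_distrib]
  exact Finset.sum_congr rfl fun i _ => integral_ite_of_measure_eq_ofReal (hb i) (hbp i) hp _ _

end Bernoulli

theorem le_mul_of_one_div_mul_le {N S X : ℝ} (hN : 0 ≤ N) (hS : N = 0 → S = 0)
    (h : 1 / N * S ≤ X) : S ≤ N * X := by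
  rcases hN.eq_or_lt with rfl | hN
  · simp [hS rfl]
  · rwa [one_div, inv_mul_le_iff₀ hN] at h

theorem sum_sum_eq_zero_of_mul_eq_zero {M : Type*} [AddCommMonoid M] {n m : ℕ}
    (f : Fin n → Fin m → M) (h : (n : ℝ) * m = 0) : ∑ i, ∑ j, f i j = 0 := by
  rcases mul_eq_zero.mp h with h | h <;> obtain rfl := Nat.cast_eq_zero.mp h <;> simp

theorem stmt_16_general {Ω : Type*} [MeasurableSpace Ω] (μ : Measure Ω) [IsProbabilityMeasure μ]
    {d n m : ℕ}
    (F : Fin n → Fin m → EuclideanSpace ℝ (Fin d) → EuclideanSpace ℝ (Fin d))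
    (Fbar : EuclideanSpace ℝ (Fin d) → EuclideanSpace ℝ (Fin d))
    (x xs : EuclideanSpace ℝ (Fin d)) (w : Fin n → EuclideanSpace ℝ (Fin d))
    (p lt : ℝ) (hp0 : 0 ≤ p)
    (b : Fin n → Ω → Bool) (hb : ∀ i, Measurable (b i))
    (hbp : ∀ i, μ {ω | b i ω = true} = ENNReal.ofReal p)
    (hcoco : (1 / ((n : ℝ) * m)) * ∑ i, ∑ j, ‖F i j x - F i j xs‖ ^ 2 ≤
      lt * ⟪Fbar x - Fbar xs, x - xs⟫) :
    ∫ ω, (∑ i, ∑ j, ‖F i j (if b i ω then x else w i) - F i j xs‖ ^ 2) ∂μ ≤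
      (1 - p) * (∑ i, ∑ j, ‖F i j (w i) - F i j xs‖ ^ 2)
        + (n : ℝ) * m * p * lt * ⟪Fbar x - Fbar xs, x - xs⟫ := by
  set V : Fin n → EuclideanSpace ℝ (Fin d) → ℝ := fun i y => ∑ j, ‖F i j y - F i j xs‖ ^ 2
  have hV : ∑ i, V i x ≤ (n : ℝ) * m * (lt * ⟪Fbar x - Fbar xs, x - xs⟫) :=
    le_mul_of_one_div_mul_le (by positivity) (sum_sum_eq_zero_of_mul_eq_zero _) hcoco
  calc ∫ ω, ∑ i, V i (if b i ω then x else w i) ∂μ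
      = ∫ ω, ∑ i, (if b i ω then V i x else V i (w i)) ∂μ := by
        simp only [apply_ite (V _)]
    _ = p * ∑ i, V i x + (1 - p) * ∑ i, V i (w i) :=
        integral_sum_ite_of_measure_eq_ofReal hb hbp hp0 _ _
    _ ≤ (1 - p) * ∑ i, V i (w i) + (n : ℝ) * m * p * lt * ⟪Fbar x - Fbar xs, x - xs⟫ := by
        linarith [mul_le_mul_of_nonneg_left hV hp0]

theorem stmt_16 {Ω : Type*} [MeasurableSpace Ω] (μ : Measure Ω) [IsProbabilityMeasure μ]
    {d n m : ℕ}
    (F : Fin n → Fin m → EuclideanSpace ℝ (Fin d) → EuclideanSpace ℝ (Fin d))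
    (Fbar : EuclideanSpace ℝ (Fin d) → EuclideanSpace ℝ (Fin d))
    (hFbar : ∀ y, Fbar y = (1 / ((n : ℝ) * m)) • ∑ i, ∑ j, F i j y)
    (x xs : EuclideanSpace ℝ (Fin d)) (w : Fin n → EuclideanSpace ℝ (Fin d))
    (p lt : ℝ) (hp0 : 0 ≤ p) (hp1 : p ≤ 1) (hlt : 0 < lt)
    (b : Fin n → Ω → Bool) (hb : ∀ i, Measurable (b i))
    (hbp : ∀ i, μ {ω | b i ω = true} = ENNReal.ofReal p)
    (hcoco : (1 / ((n : ℝ) * m)) * ∑ i, ∑ j, ‖F i j x - F i j xs‖ ^ 2 ≤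
      lt * ⟪Fbar x - Fbar xs, x - xs⟫) :
    ∫ ω, (∑ i, ∑ j, ‖F i j (if b i ω then x else w i) - F i j xs‖ ^ 2) ∂μ ≤
      (1 - p) * (∑ i, ∑ j, ‖F i j (w i) - F i j xs‖ ^ 2)
        + (n : ℝ) * m * p * lt * ⟪Fbar x - Fbar xs, x - xs⟫ :=
  stmt_16_general μ F Fbar x xs w p lt hp0 b hb hbp hcoco
end
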